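/- Let m ≤ n, let α be an integer with 1 ≤ α ≤ min(m,n)−1 or more generally 0 ≤ α ≤ ⌊(m+n)/2⌋ with (m,n,α) ≠ (m,m,m), and let w be a shuffle permutation of {1,...,m+n} with m_w its least index i with w(i) > i. If there exists i ∈ {m_w,...,m} with n−α−1 ≤ w(i)−2i ≤ n−α, then m_w ≤ α+1, and the number of such i is at most min(m, α+1) − m_w + 1. -/

import Mathlib

/-! A shuffle permutation is increasing on `{1, …, m}` with values in `{1, …, m + n}`, so
`w i + (m - i) ≤ w m ≤ m + n`, i.e. `w i - 2 i ≤ n - i`. Combined with `n - α - 1 ≤ w i - 2 i`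
this forces `i ≤ α + 1`, so every such `i` lies in `{m_w, …, min m (α + 1)}`. -/

lemma StrictMonoOn.apply_add_sub_le_of_Icc {f : ℕ → ℕ} {a b i j : ℕ}
    (hf : StrictMonoOn f (Set.Icc a b)) (hai : a ≤ i) (hij : i ≤ j) (hjb : j ≤ b) :
    f i + (j - i) ≤ f j := by
  induction j, hij using Nat.le_induction with
  | base => simp
  | succ j hij ih =>
    have hlt : f j < f (j + 1) :=
      hf ⟨hai.trans hij, by omega⟩ ⟨by omega, hjb⟩ (Nat.lt_succ_self j)
    have := ih (by omega)
    omega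

lemma le_add_one_of_le_apply_sub_two_mul {w : ℕ → ℕ} {m n α i : ℕ}
    (hmono : StrictMonoOn w (Set.Icc 1 m)) (hmaps : Set.MapsTo w (Set.Icc 1 m) (Set.Icc 1 (m + n)))
    (hi : i ∈ Set.Icc 1 m) (hlo : (n : ℤ) - α - 1 ≤ (w i : ℤ) - 2 * i) :
    i ≤ α + 1 := by
  have hgap : w i + (m - i) ≤ w m := hmono.apply_add_sub_le_of_Icc hi.1 hi.2 le_rfl
  have hwm : w m ≤ m + n := (hmaps ⟨hi.1.trans hi.2, le_rfl⟩).2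
  omega

theorem stmt17_general (m n α : ℕ)
    (w : ℕ → ℕ)
    (hbij : Set.BijOn w (Set.Icc 1 (m + n)) (Set.Icc 1 (m + n)))
    (hsh1 : ∀ i j, 1 ≤ i → i < j → j ≤ m → w i < w j)
    (mw : ℕ) (hmw1 : 1 ≤ mw)
    (hex : ∃ i, mw ≤ i ∧ i ≤ m ∧
      (n : ℤ) - α - 1 ≤ (w i : ℤ) - 2 * i ∧ (w i : ℤ) - 2 * i ≤ (n : ℤ) - α) :
    mw ≤ α + 1 ∧
      {i : ℕ | mw ≤ i ∧ i ≤ m ∧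
        (n : ℤ) - α - 1 ≤ (w i : ℤ) - 2 * i ∧
        (w i : ℤ) - 2 * i ≤ (n : ℤ) - α}.ncard ≤ min m (α + 1) - mw + 1 := by
  have hmono : StrictMonoOn w (Set.Icc 1 m) := fun i hi j hj hij => hsh1 i j hi.1 hij hj.2
  have hmaps : Set.MapsTo w (Set.Icc 1 m) (Set.Icc 1 (m + n)) :=
    hbij.mapsTo.mono_left (Set.Icc_subset_Icc_right (Nat.le_add_right m n))
  have hbound : ∀ i, mw ≤ i → i ≤ m → (n : ℤ) - α - 1 ≤ (w i : ℤ) - 2 * i → i ≤ α + 1 :=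
    fun i hi him hlo => le_add_one_of_le_apply_sub_two_mul hmono hmaps
      ⟨hmw1.trans hi, him⟩ hlo
  obtain ⟨i₀, hi₀, hi₀m, hlo₀, -⟩ := hex
  refine ⟨hi₀.trans (hbound i₀ hi₀ hi₀m hlo₀), ?_⟩
  have hsub : {i : ℕ | mw ≤ i ∧ i ≤ m ∧ (n : ℤ) - α - 1 ≤ (w i : ℤ) - 2 * i ∧
      (w i : ℤ) - 2 * i ≤ (n : ℤ) - α} ⊆ Set.Icc mw (min m (α + 1)) :=
    fun i ⟨hi, him, hlo, _⟩ => ⟨hi, le_min him (hbound i hi him hlo)⟩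
  calc _ ≤ (Set.Icc mw (min m (α + 1))).ncard := Set.ncard_le_ncard hsub (Set.finite_Icc _ _)
    _ = min m (α + 1) + 1 - mw := Set.ncard_Icc_nat _ _
    _ ≤ min m (α + 1) - mw + 1 := by omega

/-- Let `m ≤ n`, `0 ≤ α ≤ ⌊(m+n)/2⌋` with `(m,n,α) ≠ (m,m,m)`,
and let `w` be a shuffle permutation of `{1,...,m+n}` with `m_w` the least
index `i` with `w(i) > i`. If some `i ∈ {m_w,...,m}` satisfies
`n − α − 1 ≤ w(i) − 2i ≤ n − α`, then `m_w ≤ α + 1`, and the number of such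
`i` is at most `min(m, α+1) − m_w + 1`. -/
theorem stmt17 (m n α : ℕ) (hm : 1 ≤ m) (hmn : m ≤ n) (hα : α ≤ (m + n) / 2)
    (hne : ¬(n = m ∧ α = m))
    (w : ℕ → ℕ)
    (hbij : Set.BijOn w (Set.Icc 1 (m + n)) (Set.Icc 1 (m + n)))
    (hsh1 : ∀ i j, 1 ≤ i → i < j → j ≤ m → w i < w j)
    (hsh2 : ∀ i j, m + 1 ≤ i → i < j → j ≤ m + n → w i < w j)
    (mw : ℕ) (hmw1 : 1 ≤ mw) (hmwm : mw ≤ m) (h1 : mw < w mw)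
    (hleast : ∀ k, 1 ≤ k → k < mw → w k ≤ k)
    (hex : ∃ i, mw ≤ i ∧ i ≤ m ∧
      (n : ℤ) - α - 1 ≤ (w i : ℤ) - 2 * i ∧ (w i : ℤ) - 2 * i ≤ (n : ℤ) - α) :
    mw ≤ α + 1 ∧
      {i : ℕ | mw ≤ i ∧ i ≤ m ∧
        (n : ℤ) - α - 1 ≤ (w i : ℤ) - 2 * i ∧
        (w i : ℤ) - 2 * i ≤ (n : ℤ) - α}.ncard ≤ min m (α + 1) - mw + 1 :=
  stmt17_general m n α w hbij hsh1 mw hmw1 hex
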